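/- arXiv:1802.04114 — 4 statements merged into one kernel-verified Lean document; each statement's English description precedes it below -/
import Mathlib

section
/- Let H be a real Hilbert space, X a measure space, 1 < p < ∞, and S : H → L^p(X) a bounded linear operator. Let 𝒮 = sup_{f≠0} ‖Sf‖_{L^p} / ‖f‖_H and let M = {f* ∈ H : ‖Sf*‖_{L^p} = 𝒮‖f*‖_H}. Then for all f ∈ H, 𝒮²‖f‖_H² − ‖Sf‖_{L^p}² ≤ 𝒮² · dist(f, M)², where dist(f, M) = inf{‖f − f*‖_H : f* ∈ M}. -/
open MeasureTheory
open scoped ENNReal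
open scoped RealInnerProductSpace

/-- Key claim: if `g` is a nonzero extremizer, then `𝒮 |⟪f,g⟫| ≤ ‖S f‖ ‖g‖`. -/
lemma aux_key {H : Type*} [NormedAddCommGroup H] [InnerProductSpace ℝ H]
    {E : Type*} [NormedAddCommGroup E] [NormedSpace ℝ E]
    (S : H →L[ℝ] E) (𝒮 : ℝ) (hb : ∀ x, ‖S x‖ ≤ 𝒮 * ‖x‖) (h𝒮pos : 0 < 𝒮)
    (g : H) (hg : ‖S g‖ = 𝒮 * ‖g‖) (hg0 : g ≠ 0) (f : H) :
    𝒮 * |⟪f, g⟫| ≤ ‖S f‖ * ‖g‖ := by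
  have hgn : (0:ℝ) < ‖g‖ := norm_pos_iff.mpr hg0
  have hSg0 : S g ≠ 0 := by
    intro h
    rw [h, norm_zero] at hg
    nlinarith [mul_pos h𝒮pos hgn]
  obtain ⟨L, hL1, hL2⟩ := exists_dual_vector ℝ (S g) (norm_ne_zero_iff.mpr hSg0)
  set α : ℝ := ⟪f, g⟫ / ‖g‖ ^ 2 with hα
  set u : H := f - α • g with hu
  have hgsq : ⟪g, g⟫ = ‖g‖ ^ 2 := real_inner_self_eq_norm_sq g
  have hug : ⟪g, u⟫ = 0 := by
    rw [hu, inner_sub_right, real_inner_smul_right, hgsq, hα, real_inner_comm]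
    field_simp; ring
  -- norm expansion
  have hnorm : ∀ t : ℝ, ‖g + t • u‖ ^ 2 = ‖g‖ ^ 2 + t ^ 2 * ‖u‖ ^ 2 := by
    intro t
    have := norm_add_sq_real g (t • u)
    rw [real_inner_smul_right, hug] at this
    rw [this, norm_smul, Real.norm_eq_abs, mul_pow, sq_abs]
    ring
  -- linear lower bound
  have hlin : ∀ t : ℝ, 𝒮 * ‖g‖ + t * L (S u) ≤ 𝒮 * ‖g + t • u‖ := by
    intro t
    have h1 : L (S (g + t • u)) = 𝒮 * ‖g‖ + t * L (S u) := by
      rw [map_add, _root_.map_smul, map_add, _root_.map_smul, hL2, hg]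
      simp [smul_eq_mul]
    have h2 : L (S (g + t • u)) ≤ ‖L‖ * ‖S (g + t • u)‖ := by
      calc L (S (g + t • u)) ≤ |L (S (g + t • u))| := le_abs_self _
        _ ≤ ‖L‖ * ‖S (g + t • u)‖ := by
            simpa [Real.norm_eq_abs] using L.le_opNorm (S (g + t • u))
    rw [hL1, one_mul] at h2
    calc 𝒮 * ‖g‖ + t * L (S u) = L (S (g + t • u)) := h1.symm
      _ ≤ ‖S (g + t • u)‖ := h2
      _ ≤ 𝒮 * ‖g + t • u‖ := hb _
  -- the derivative term vanishes
  have hc : L (S u) = 0 := by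
    by_contra hc0
    have hu0 : u ≠ 0 := by
      intro h
      apply hc0
      rw [h, map_zero, map_zero]
    have hun : (0:ℝ) < ‖u‖ := norm_pos_iff.mpr hu0
    set c : ℝ := L (S u) with hcdef
    have hcabs : (0:ℝ) < |c| := abs_pos.mpr hc0
    set s : ℝ := 𝒮 * ‖g‖ * |c| / (𝒮 ^ 2 * ‖u‖ ^ 2) with hs
    have hspos : 0 < s := by positivity
    set t : ℝ := if 0 < c then s else -s with ht
    have htc : t * c = s * |c| := by
      rcases lt_trichotomy 0 c with h | h | h
      · rw [ht, if_pos h, abs_of_pos h]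
      · exact absurd h.symm hc0
      · rw [ht, if_neg (not_lt.mpr h.le), abs_of_neg h]; ring
    have ht2 : t ^ 2 = s ^ 2 := by
      rcases le_or_gt c 0 with h | h
      · rw [ht, if_neg (not_lt.mpr h)]; ring
      · rw [ht, if_pos h]
    have key := hlin t
    rw [htc] at key
    have hLHS : (0:ℝ) ≤ 𝒮 * ‖g‖ + s * |c| := by positivity
    have hsq : (𝒮 * ‖g‖ + s * |c|) ^ 2 ≤ 𝒮 ^ 2 * ‖g + t • u‖ ^ 2 := by
      have h2 : 𝒮 * ‖g + t • u‖ = |𝒮 * ‖g + t • u‖| := by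
        rw [abs_of_nonneg (by positivity)]
      nlinarith [key, hLHS, norm_nonneg (g + t • u)]
    rw [hnorm t, ht2] at hsq
    -- 2 s 𝒮 ‖g‖ |c| + s² c² ≤ 𝒮² s² ‖u‖²
    have hseq : 𝒮 ^ 2 * s * ‖u‖ ^ 2 = 𝒮 * ‖g‖ * |c| := by
      rw [hs]; field_simp
    nlinarith [sq_nonneg (s * c), mul_pos (mul_pos h𝒮pos hgn) hcabs, sq_abs c,
      mul_le_mul_of_nonneg_left hsq (le_of_lt (by positivity : (0:ℝ) < 1))]
  -- conclude
  have hfu : f = α • g + u := by rw [hu]; abel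
  have hLSf : L (S f) = α * (𝒮 * ‖g‖) := by
    rw [hfu, map_add, _root_.map_smul, map_add, _root_.map_smul, hL2, hg, hc]
    simp [smul_eq_mul]
  have h1 : |L (S f)| ≤ ‖S f‖ := by
    have := L.le_opNorm (S f)
    rw [hL1, one_mul] at this
    simpa [Real.norm_eq_abs] using this
  rw [hLSf, abs_mul, abs_of_pos (mul_pos h𝒮pos hgn)] at h1
  have hinner : |⟪f, g⟫| = |α| * ‖g‖ ^ 2 := by
    rw [hα, abs_div, abs_of_pos (by positivity : (0:ℝ) < ‖g‖ ^ 2)]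
    field_simp
  rw [hinner]
  nlinarith [mul_le_mul_of_nonneg_right h1 hgn.le]

/-- Abstract upper bound (Proposition 2.1): for a bounded linear operator
`S : H → L^p(X)` with operator norm `𝒮` and extremizer set `M`,
`𝒮²‖f‖² − ‖Sf‖² ≤ 𝒮² dist(f, M)²`. -/
theorem abstract_upper_bound
    {H : Type*} [NormedAddCommGroup H] [InnerProductSpace ℝ H] [CompleteSpace H]
    {X : Type*} [MeasurableSpace X] (μ : Measure X) (p : ℝ≥0∞)
    (hp : 1 < p) (hp' : p < ⊤) [Fact (1 ≤ p)]
    (S : H →L[ℝ] Lp ℝ p μ)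
    (𝒮 : ℝ) (h𝒮 : 𝒮 = ‖S‖) (h𝒮pos : 0 < 𝒮)
    (M : Set H) (hM : M = {g : H | ‖S g‖ = 𝒮 * ‖g‖})
    (f : H) :
    𝒮 ^ 2 * ‖f‖ ^ 2 - ‖S f‖ ^ 2 ≤ 𝒮 ^ 2 * (Metric.infDist f M) ^ 2 := by
  have hb : ∀ x : H, ‖S x‖ ≤ 𝒮 * ‖x‖ := by
    intro x; rw [h𝒮]; exact S.le_opNorm x
  have h0M : (0 : H) ∈ M := by rw [hM]; simp
  have hMne : M.Nonempty := ⟨0, h0M⟩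
  set A : ℝ := ‖f‖ ^ 2 - ‖S f‖ ^ 2 / 𝒮 ^ 2 with hA
  -- pointwise bound
  have hpt : ∀ g ∈ M, A ≤ dist f g ^ 2 := by
    intro g hgM
    rw [hM] at hgM
    have hg : ‖S g‖ = 𝒮 * ‖g‖ := hgM
    rw [dist_eq_norm]
    rcases eq_or_ne g 0 with rfl | hg0
    · simp only [sub_zero]
      rw [hA]
      have : (0:ℝ) ≤ ‖S f‖ ^ 2 / 𝒮 ^ 2 := by positivity
      linarith
    · have hgn : (0:ℝ) < ‖g‖ := norm_pos_iff.mpr hg0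
      have hkey := aux_key S 𝒮 hb h𝒮pos g hg hg0 f
      -- ‖f - g‖² = ‖f‖² - 2⟪f,g⟫ + ‖g‖²
      have hexp : ‖f - g‖ ^ 2 = ‖f‖ ^ 2 - 2 * ⟪f, g⟫ + ‖g‖ ^ 2 :=
        norm_sub_sq_real f g
      -- ⟪f,g⟫² / ‖g‖² ≤ ‖S f‖²/𝒮²
      have h1 : 𝒮 ^ 2 * ⟪f, g⟫ ^ 2 ≤ ‖S f‖ ^ 2 * ‖g‖ ^ 2 := by
        have h2 : (𝒮 * |⟪f, g⟫|) ^ 2 ≤ (‖S f‖ * ‖g‖) ^ 2 := by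
          apply sq_le_sq' _ hkey
          nlinarith [abs_nonneg ⟪f, g⟫, norm_nonneg (S f), norm_nonneg g,
            mul_nonneg (mul_nonneg h𝒮pos.le (abs_nonneg ⟪f, g⟫)) (norm_nonneg g)]
        calc 𝒮 ^ 2 * ⟪f, g⟫ ^ 2 = (𝒮 * |⟪f, g⟫|) ^ 2 := by rw [mul_pow, sq_abs]
          _ ≤ (‖S f‖ * ‖g‖) ^ 2 := h2
          _ = ‖S f‖ ^ 2 * ‖g‖ ^ 2 := by ring
      -- combine
      rw [hA, hexp]
      have h𝒮2 : (0:ℝ) < 𝒮 ^ 2 := by positivity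
      have h3 : ⟪f, g⟫ ^ 2 / ‖g‖ ^ 2 ≤ ‖S f‖ ^ 2 / 𝒮 ^ 2 := by
        rw [div_le_div_iff₀ (by positivity) h𝒮2]
        nlinarith [h1]
      have h4 : 2 * ⟪f, g⟫ - ‖g‖ ^ 2 ≤ ⟪f, g⟫ ^ 2 / ‖g‖ ^ 2 := by
        rw [← sub_nonneg]
        have : ⟪f, g⟫ ^ 2 / ‖g‖ ^ 2 - (2 * ⟪f, g⟫ - ‖g‖ ^ 2)
            = (⟪f, g⟫ / ‖g‖ - ‖g‖) ^ 2 := by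
          field_simp
          ring
        rw [this]
        positivity
      linarith
  -- pass to infimum
  have hAle : A ≤ (Metric.infDist f M) ^ 2 := by
    rcases le_or_gt A 0 with h | h
    · have := Metric.infDist_nonneg (x := f) (s := M)
      nlinarith
    · set r : ℝ := Real.sqrt A with hr
      have hrle : r ≤ Metric.infDist f M := by
        by_contra hlt
        push_neg at hlt
        obtain ⟨g, hgM, hdl⟩ := (Metric.infDist_lt_iff hMne).mp hlt
        have h2 := hpt g hgM
        have h3 : r ^ 2 ≤ dist f g ^ 2 := by
          rw [hr, Real.sq_sqrt h.le]; exact h2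
        nlinarith [dist_nonneg (x := f) (y := g), Real.sqrt_nonneg A]
      have : r ^ 2 ≤ (Metric.infDist f M) ^ 2 := by
        apply pow_le_pow_left₀ (Real.sqrt_nonneg A) hrle
      rwa [hr, Real.sq_sqrt h.le] at this
  -- conclude
  have h𝒮ne : 𝒮 ≠ 0 := ne_of_gt h𝒮pos
  have : 𝒮 ^ 2 * A ≤ 𝒮 ^ 2 * (Metric.infDist f M) ^ 2 :=
    mul_le_mul_of_nonneg_left hAle (by positivity)
  have hAeq : 𝒮 ^ 2 * A = 𝒮 ^ 2 * ‖f‖ ^ 2 - ‖S f‖ ^ 2 := by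
    rw [hA]; field_simp
  linarith [this, hAeq]
end

section
/- Suppose f_n ∈ H satisfy ‖f_n‖_H = 1 and ‖Sf_n‖_{L^p(X)} → 0, where 𝒮 > 0 is the operator norm of the bounded linear operator S : H → L^p(X) and M = {f* : ‖Sf*‖ = 𝒮‖f*‖}. Then dist(f_n, M) → 1 as n → ∞. -/
open MeasureTheory
open scoped ENNReal

set_option maxHeartbeats 1000000 in
/-- If `‖f_n‖ = 1` and `‖S f_n‖ → 0`, where `𝒮 > 0` is the operator norm of `S`
and `M` the set of extremizers, then `dist(f_n, M) → 1`. -/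
theorem dist_to_extremizers_tendsto_one
    {H : Type*} [NormedAddCommGroup H] [InnerProductSpace ℝ H] [CompleteSpace H]
    {X : Type*} [MeasurableSpace X] (μ : Measure X) (p : ℝ≥0∞)
    (hp : 1 < p) (hp' : p < ⊤) [Fact (1 ≤ p)]
    (S : H →L[ℝ] Lp ℝ p μ)
    (𝒮 : ℝ) (h𝒮 : 𝒮 = ‖S‖) (h𝒮pos : 0 < 𝒮)
    (M : Set H) (hM : M = {g : H | ‖S g‖ = 𝒮 * ‖g‖})
    (f : ℕ → H) (hf : ∀ n, ‖f n‖ = 1)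
    (hSf : Filter.Tendsto (fun n => ‖S (f n)‖) Filter.atTop (nhds 0)) :
    Filter.Tendsto (fun n => Metric.infDist (f n) M) Filter.atTop (nhds 1) := by
  have hM0 : (0 : H) ∈ M := by rw [hM]; simp
  -- Key: for any extremizer g, 𝒮 ⟪f n, g⟫ ≤ ‖S (f n)‖ * ‖g‖
  have key : ∀ n, ∀ g ∈ M, 𝒮 * inner ℝ (f n) g ≤ ‖S (f n)‖ * ‖g‖ := by
    intro n g hg
    rw [hM] at hg
    by_contra h
    push_neg at h
    set ε := ‖S (f n)‖ with hε
    set a : ℝ := inner ℝ (f n) g with ha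
    set δ : ℝ := 𝒮 * a - ε * ‖g‖ with hδ
    have hδpos : 0 < δ := by simp only [hδ]; linarith
    set t : ℝ := 𝒮 / δ with ht'
    have ht : 0 < t := div_pos h𝒮pos hδpos
    have htδ : t * δ = 𝒮 := by rw [ht']; field_simp
    have hεnn : 0 ≤ ε := norm_nonneg _
    have hCS : a ≤ ‖g‖ := by
      have := real_inner_le_norm (f n) g
      rw [hf n] at this; simpa using this
    have hεle : ε ≤ 𝒮 := by
      have := S.le_opNorm (f n)
      rw [hf n, ← h𝒮] at this; linarith
    have hapos : 0 < a := by
      rcases le_or_gt a 0 with h0 | h0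
      · exfalso
        have : 𝒮 * a ≤ 0 := mul_nonpos_of_nonneg_of_nonpos (le_of_lt h𝒮pos) h0
        nlinarith [mul_nonneg hεnn (norm_nonneg g)]
      · exact h0
    have hδle : δ ≤ 𝒮 * ‖g‖ := by
      have : 𝒮 * a ≤ 𝒮 * ‖g‖ := by nlinarith
      nlinarith [mul_nonneg hεnn (norm_nonneg g)]
    -- triangle inequality at t•g
    have e1 : ‖S (t • g)‖ = 𝒮 * (t * ‖g‖) := by
      rw [_root_.map_smul, norm_smul, hg, Real.norm_eq_abs, abs_of_pos ht]; ring
    have e2 : ‖S (t • g)‖ ≤ ‖S (t • g - f n)‖ + ε := by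
      have : S (t • g) = S (t • g - f n) + S (f n) := by rw [map_sub]; abel
      rw [this]; exact norm_add_le _ _
    have e3 : ‖S (t • g - f n)‖ ≤ 𝒮 * ‖t • g - f n‖ := by
      rw [h𝒮]; exact S.le_opNorm _
    have h1 : 𝒮 * (t * ‖g‖) - ε ≤ 𝒮 * ‖t • g - f n‖ := by
      rw [← e1]; linarith
    -- LHS is nonnegative
    have hLHS : 0 ≤ 𝒮 * (t * ‖g‖) - ε := by
      have hg0 : (0:ℝ) < ‖g‖ := by
        rcases (norm_nonneg g).lt_or_eq with h' | h'
        · exact h'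
        · exfalso; rw [← h'] at hCS; nlinarith
      have h4 : 𝒮 * (t * ‖g‖) * δ = 𝒮 * 𝒮 * ‖g‖ := by
        rw [ht']; field_simp
      nlinarith [mul_le_mul hεle hδle hδpos.le h𝒮pos.le]
    -- squared norm identity
    have hsq : ‖t • g - f n‖ ^ 2 = t ^ 2 * ‖g‖ ^ 2 - 2 * (t * a) + 1 := by
      have := @norm_sub_sq_real _ _ _ (t • g) (f n)
      rw [norm_smul, Real.norm_eq_abs, abs_of_pos ht, hf n] at this
      rw [this, real_inner_smul_left, real_inner_comm]
      rw [ha]; ring_nf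
    -- square the inequality
    have h2 : (𝒮 * (t * ‖g‖) - ε) ^ 2 ≤ 𝒮 ^ 2 * ‖t • g - f n‖ ^ 2 := by
      have := mul_self_le_mul_self hLHS h1
      nlinarith [norm_nonneg (t • g - f n)]
    rw [hsq] at h2
    -- derive 2 t δ 𝒮 ≤ 𝒮² - ε² ≤ 𝒮², contradiction with t δ = 𝒮
    nlinarith [sq_nonneg ε, sq_nonneg 𝒮, mul_pos h𝒮pos h𝒮pos]
  -- lower bound for the distance
  have low : ∀ n, Real.sqrt (1 - (‖S (f n)‖ / 𝒮) ^ 2) ≤ Metric.infDist (f n) M := by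
    intro n
    by_contra hc
    push_neg at hc
    obtain ⟨g, hg, hd⟩ := (Metric.infDist_lt_iff ⟨0, hM0⟩).1 hc
    rw [← not_le] at hd
    apply hd
    have hkey := key n g hg
    have hεle : ‖S (f n)‖ ≤ 𝒮 := by
      have := S.le_opNorm (f n)
      rw [hf n, ← h𝒮] at this; linarith
    rw [dist_eq_norm]
    have hsq : ‖f n - g‖ ^ 2 = 1 - 2 * inner ℝ (f n) g + ‖g‖ ^ 2 := by
      have := @norm_sub_sq_real _ _ _ (f n) (g)
      rw [hf n] at this; rw [this]; ring
    have hquad : 1 - (‖S (f n)‖ / 𝒮) ^ 2 ≤ ‖f n - g‖ ^ 2 := by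
      rw [hsq]
      have hinner : inner ℝ (f n) g ≤ (‖S (f n)‖ / 𝒮) * ‖g‖ := by
        rw [div_mul_eq_mul_div, le_div_iff₀ h𝒮pos]
        nlinarith
      nlinarith [sq_nonneg (‖g‖ - ‖S (f n)‖ / 𝒮)]
    calc Real.sqrt (1 - (‖S (f n)‖ / 𝒮) ^ 2) ≤ Real.sqrt (‖f n - g‖ ^ 2) :=
          Real.sqrt_le_sqrt hquad
      _ = ‖f n - g‖ := Real.sqrt_sq (norm_nonneg _)
  have high : ∀ n, Metric.infDist (f n) M ≤ 1 := by
    intro n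
    have := Metric.infDist_le_dist_of_mem (x := f n) hM0
    simpa [dist_eq_norm, hf n] using this
  have hT : Filter.Tendsto (fun n => Real.sqrt (1 - (‖S (f n)‖ / 𝒮) ^ 2))
      Filter.atTop (nhds 1) := by
    have h1 : Filter.Tendsto (fun n => 1 - (‖S (f n)‖ / 𝒮) ^ 2) Filter.atTop (nhds 1) := by
      have := ((hSf.div_const 𝒮).pow 2).const_sub 1
      norm_num at this
      exact this
    have h2 := h1.sqrt
    rwa [Real.sqrt_one] at h2
  exact tendsto_of_tendsto_of_tendsto_of_le_of_le hT tendsto_const_nhds low high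
end

section
/- Let d ≥ 2 be even, p = 2(d+1)/(d−1), and h_d(T) = |cos((d−1)T/2)|^{p−2}. If k ∈ ℕ is not a multiple of d−1, then ∫_{−π}^{π} h_d(T) cos(kT) dT = 0. -/
open Real intervalIntegral

/-- For even `d ≥ 2`, `p = 2(d+1)/(d−1)`, and `k` not a multiple of `d−1`,
the Fourier cosine coefficient `∫_{−π}^{π} |cos((d−1)T/2)|^{p−2} cos(kT) dT` vanishes. -/
theorem fourier_coeff_vanish (d : ℕ) (hd : 2 ≤ d) (hde : Even d)
    (p : ℝ) (hp : p = 2 * ((d : ℝ) + 1) / ((d : ℝ) - 1))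
    (k : ℕ) (hk : ¬ (d - 1) ∣ k) :
    ∫ T in (-π)..π, |Real.cos (((d : ℝ) - 1) * T / 2)| ^ (p - 2) * Real.cos ((k : ℝ) * T)
      = 0 := by
  have hd2 : (2:ℝ) ≤ (d:ℝ) := by exact_mod_cast hd
  set c : ℝ := (d:ℝ) - 1 with hc
  have hcpos : 0 < c := by simp only [hc]; linarith
  have hq : 0 < p - 2 := by
    have h4 : p - 2 = 4 / c := by
      rw [hp, hc, eq_div_iff (by linarith), sub_mul, div_mul_cancel₀ _ (by linarith)]; ring
    rw [h4]; positivity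
  set f : ℝ → ℝ := fun T => |Real.cos (c * T / 2)| ^ (p - 2) with hf
  have hfc : Continuous f := by
    apply Continuous.rpow_const
    · exact (Real.continuous_cos.comp (by continuity)).abs
    · intro x; right; linarith
  have hfeven : ∀ x, f (-x) = f x := by
    intro x
    simp [hf, mul_neg, neg_div, Real.cos_neg]
  have hfa : ∀ x, f (x + 2*π/c) = f x := by
    intro x
    have h1 : c * (x + 2*π/c) / 2 = c * x / 2 + π := by
      field_simp
    simp [hf, h1, Real.cos_add_pi]
  have hccos : Continuous fun T => Real.cos ((k:ℝ) * T) :=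
    Real.continuous_cos.comp (continuous_const.mul continuous_id)
  have hcsin : Continuous fun T => Real.sin ((k:ℝ) * T) :=
    Real.continuous_sin.comp (continuous_const.mul continuous_id)
  set g : ℝ → ℝ := fun T => f T * Real.cos ((k:ℝ) * T) with hg
  have hgc : Continuous g := hfc.mul hccos
  -- g is 2π-periodic
  have hfper : Function.Periodic f (2*π/c) := hfa
  have hfper2 : Function.Periodic f (2*π) := by
    have h := hfper.nat_mul (d-1)
    have hcast : ((d-1:ℕ):ℝ) = c := by
      rw [hc]; push_cast [Nat.cast_sub (by omega : 1 ≤ d)]; ring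
    have : ((d-1:ℕ):ℝ) * (2*π/c) = 2*π := by
      rw [hcast]; field_simp
    rwa [this] at h
  have hcosper : Function.Periodic (fun T => Real.cos ((k:ℝ)*T)) (2*π) := by
    intro x
    have : (k:ℝ) * (x + 2*π) = (k:ℝ)*x + (k:ℕ) * (2*π) := by push_cast; ring
    simp [this, Real.cos_add_nat_mul_two_pi]
  have hgper : Function.Periodic g (2*π) := hfper2.mul hcosper
  set θ : ℝ := (k:ℝ) * (2*π/c) with hθ
  -- the sine integral vanishes by oddness
  have hJ : (∫ T in (-π)..π, f T * Real.sin ((k:ℝ)*T)) = 0 := by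
    have h := intervalIntegral.integral_comp_neg (a := -π) (b := π)
      (fun T => f T * Real.sin ((k:ℝ)*T))
    simp only [neg_neg] at h
    have h2 : (fun T => f (-T) * Real.sin ((k:ℝ)*(-T)))
        = fun T => -(f T * Real.sin ((k:ℝ)*T)) := by
      funext T
      rw [hfeven T, mul_neg, Real.sin_neg]; ring
    rw [show (∫ T in (-π)..π, f (-T) * Real.sin ((k:ℝ)*(-T)))
        = ∫ T in (-π)..π, -(f T * Real.sin ((k:ℝ)*T)) from by rw [h2]] at h
    rw [intervalIntegral.integral_neg] at h
    linarith
  -- shift the integral by 2π/c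
  have hshift : (∫ T in (-π)..π, g T) = ∫ T in (-π)..π, g (T + 2*π/c) := by
    rw [intervalIntegral.integral_comp_add_right g (2*π/c)]
    have h1 := hgper.intervalIntegral_add_eq (-π) (-π + 2*π/c)
    have e1 : -π + 2*π = π := by ring
    have e2 : -π + 2*π/c + 2*π = π + 2*π/c := by ring
    rw [e1, e2] at h1
    exact h1
  have hgval : ∀ x, g (x + 2*π/c)
      = Real.cos θ * (f x * Real.cos ((k:ℝ)*x)) - Real.sin θ * (f x * Real.sin ((k:ℝ)*x)) := by
    intro x
    have h1 : (k:ℝ) * (x + 2*π/c) = (k:ℝ)*x + θ := by rw [hθ]; ring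
    simp only [hg, hfa x, h1, Real.cos_add]
    ring
  have hI : (∫ T in (-π)..π, g T) = Real.cos θ * (∫ T in (-π)..π, g T) := by
    calc (∫ T in (-π)..π, g T) = ∫ T in (-π)..π, g (T + 2*π/c) := hshift
      _ = ∫ T in (-π)..π, (Real.cos θ * (f T * Real.cos ((k:ℝ)*T))
            - Real.sin θ * (f T * Real.sin ((k:ℝ)*T))) := by
          apply intervalIntegral.integral_congr
          intro x _; exact hgval x
      _ = (∫ T in (-π)..π, Real.cos θ * (f T * Real.cos ((k:ℝ)*T)))
            - ∫ T in (-π)..π, Real.sin θ * (f T * Real.sin ((k:ℝ)*T)) := by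
          apply intervalIntegral.integral_sub
          · exact (continuous_const.mul (hfc.mul hccos)).intervalIntegrable _ _
          · exact (continuous_const.mul (hfc.mul hcsin)).intervalIntegrable _ _
      _ = Real.cos θ * (∫ T in (-π)..π, g T)
            - Real.sin θ * (∫ T in (-π)..π, f T * Real.sin ((k:ℝ)*T)) := by
          rw [intervalIntegral.integral_const_mul, intervalIntegral.integral_const_mul]
      _ = Real.cos θ * (∫ T in (-π)..π, g T) := by rw [hJ]; ring
  have hcosθ : Real.cos θ ≠ 1 := by
    intro hco
    rcases (Real.cos_eq_one_iff θ).mp hco with ⟨m, hm⟩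
    -- hm relates m and θ
    have hkc : (k:ℝ) = (m:ℝ) * c := by
      have hπ : π ≠ 0 := Real.pi_ne_zero
      have hθeq : θ = (k:ℝ) * (2*π/c) := hθ
      field_simp [hθeq] at hm
      have h2 : (k:ℝ) * (2*π) = ((m:ℝ) * c) * (2*π) := by
        rw [hθeq] at hm
        rw [show (k:ℝ) * (2*π) = (k:ℝ) * (2*π/c) * c by rw [mul_assoc, div_mul_cancel₀ _ hcpos.ne'], ← hm]; ring
      exact mul_right_cancel₀ (by positivity) h2
    have hcast : ((d-1:ℕ):ℝ) = c := by
      rw [hc]; push_cast [Nat.cast_sub (by omega : 1 ≤ d)]; ring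
    have hint : (k:ℤ) = m * ((d-1:ℕ):ℤ) := by
      have : (k:ℝ) = (m:ℝ) * ((d-1:ℕ):ℝ) := by rw [hcast]; exact hkc
      exact_mod_cast this
    have hdvd : ((d-1:ℕ):ℤ) ∣ (k:ℤ) := ⟨m, by linarith [hint]⟩
    exact hk (Int.natCast_dvd_natCast.mp hdvd)
  have : (1 - Real.cos θ) * (∫ T in (-π)..π, g T) = 0 := by linarith [hI]
  have hne : (1 - Real.cos θ) ≠ 0 := fun h => hcosθ (by linarith)
  have hzero : (∫ T in (-π)..π, g T) = 0 := by
    rcases mul_eq_zero.mp this with h | h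
    · exact absurd h hne
    · exact h
  exact hzero
end

section
/- Let p > 2. Then ∫_0^{π/2} |cos T|^{p−2} cos T cos(3T) dT > 0. -/
open Real intervalIntegral

lemma cos_rpow_continuous (s : ℝ) (hs : 0 ≤ s) :
    Continuous fun T : ℝ => Real.cos T ^ s :=
  Real.continuous_cos.rpow_const fun _ => Or.inr hs

lemma cos_rpow_integral_pos (s : ℝ) (hs : 0 ≤ s) :
    0 < ∫ T in (0:ℝ)..(π / 2), Real.cos T ^ s := by
  apply intervalIntegral.intervalIntegral_pos_of_pos_on
  · exact (cos_rpow_continuous s hs).intervalIntegrable _ _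
  · intro x hx
    exact Real.rpow_pos_of_pos (Real.cos_pos_of_mem_Ioo ⟨by linarith [hx.1, Real.pi_pos], hx.2⟩) s
  · linarith [Real.pi_pos]

lemma rpow_add_two' (x : ℝ) (hx : 0 ≤ x) (s : ℝ) (hs : 0 < s) :
    x ^ s * x ^ 2 = x ^ (s + 2) := by
  rcases eq_or_lt_of_le hx with h | h
  · rw [← h, Real.zero_rpow hs.ne', Real.zero_rpow (by linarith)]
    ring
  · rw [← Real.rpow_natCast x 2, ← Real.rpow_add h]
    norm_num

lemma rpow_add_one' (x : ℝ) (hx : 0 ≤ x) (s : ℝ) (hs : 0 < s) :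
    x ^ s * x = x ^ (s + 1) := by
  rcases eq_or_lt_of_le hx with h | h
  · rw [← h, Real.zero_rpow hs.ne', Real.zero_rpow (by linarith)]
    ring
  · rw [Real.rpow_add_one h.ne']

lemma cos_rpow_recursion (p : ℝ) (hp : 0 < p) :
    (p + 2) * ∫ T in (0:ℝ)..(π / 2), Real.cos T ^ (p + 2)
      = (p + 1) * ∫ T in (0:ℝ)..(π / 2), Real.cos T ^ p := by
  have hderiv : ∀ T ∈ Set.uIcc (0:ℝ) (π / 2),
      HasDerivAt (fun T => Real.cos T ^ (p + 1) * Real.sin T)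
        ((p + 1) * Real.cos T ^ p * (-Real.sin T) * Real.sin T
          + Real.cos T ^ (p + 1) * Real.cos T) T := by
    intro T _
    have hx : HasDerivAt (fun x : ℝ => x ^ (p + 1))
        ((p + 1) * Real.cos T ^ (p + 1 - 1)) (Real.cos T) :=
      Real.hasDerivAt_rpow_const (Or.inr (by linarith))
    have h1 := hx.comp T (Real.hasDerivAt_cos T)
    have h2 := h1.mul (Real.hasDerivAt_sin T)
    have hpe : p + 1 - 1 = p := by ring
    rw [hpe] at h2
    exact h2
  have hint : IntervalIntegrable
      (fun T => (p + 1) * Real.cos T ^ p * (-Real.sin T) * Real.sin T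
          + Real.cos T ^ (p + 1) * Real.cos T) MeasureTheory.volume 0 (π / 2) := by
    apply Continuous.intervalIntegrable
    exact (((continuous_const.mul (cos_rpow_continuous p hp.le)).mul
      Real.continuous_sin.neg).mul Real.continuous_sin).add
      ((cos_rpow_continuous (p + 1) (by linarith)).mul Real.continuous_cos)
  have key := intervalIntegral.integral_eq_sub_of_hasDerivAt hderiv hint
  rw [Real.cos_pi_div_two, Real.sin_pi_div_two, Real.cos_zero, Real.sin_zero,
    Real.zero_rpow (by linarith : p + 1 ≠ 0), Real.one_rpow] at key
  have hcongr : (∫ T in (0:ℝ)..(π / 2),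
      ((p + 1) * Real.cos T ^ p * (-Real.sin T) * Real.sin T
        + Real.cos T ^ (p + 1) * Real.cos T))
      = ∫ T in (0:ℝ)..(π / 2),
        ((p + 2) * Real.cos T ^ (p + 2) - (p + 1) * Real.cos T ^ p) := by
    apply intervalIntegral.integral_congr
    intro T hT
    rw [Set.uIcc_of_le (by linarith [Real.pi_pos])] at hT
    have hc : 0 ≤ Real.cos T := Real.cos_nonneg_of_mem_Icc
      ⟨by linarith [hT.1, Real.pi_pos], hT.2⟩
    have hsin : Real.sin T * Real.sin T = 1 - Real.cos T ^ 2 := by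
      have := Real.sin_sq_add_cos_sq T
      nlinarith
    simp only
    have e1 : Real.cos T ^ p * Real.cos T ^ 2 = Real.cos T ^ (p + 2) :=
      rpow_add_two' _ hc p hp
    have e2 : Real.cos T ^ (p + 1) * Real.cos T = Real.cos T ^ (p + 1 + 1) :=
      rpow_add_one' _ hc (p + 1) (by linarith)
    have e3 : p + 1 + 1 = p + 2 := by ring
    rw [e3] at e2
    linear_combination (-(p + 1) * Real.cos T ^ p) * hsin + e2 + (p + 1) * e1
  rw [hcongr] at key
  have hi2 : IntervalIntegrable (fun T => Real.cos T ^ (p + 2))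
      MeasureTheory.volume 0 (π / 2) :=
    (cos_rpow_continuous _ (by linarith)).intervalIntegrable _ _
  have hi0 : IntervalIntegrable (fun T => Real.cos T ^ p)
      MeasureTheory.volume 0 (π / 2) :=
    (cos_rpow_continuous _ hp.le).intervalIntegrable _ _
  rw [intervalIntegral.integral_sub ((hi2.const_mul _)) ((hi0.const_mul _)),
    intervalIntegral.integral_const_mul, intervalIntegral.integral_const_mul] at key
  linarith [key]

/-- For `p > 2`, `∫_0^{π/2} |cos T|^{p−2} cos T cos 3T dT > 0`. -/
theorem weighted_cos_integral_pos (p : ℝ) (hp : 2 < p) :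
    0 < ∫ T in (0:ℝ)..(π / 2), |Real.cos T| ^ (p - 2) * Real.cos T * Real.cos (3 * T) := by
  have hq : (0:ℝ) < p - 2 := by linarith
  have hcongr : (∫ T in (0:ℝ)..(π / 2),
      |Real.cos T| ^ (p - 2) * Real.cos T * Real.cos (3 * T))
      = ∫ T in (0:ℝ)..(π / 2),
        (4 * Real.cos T ^ (p + 2) - 3 * Real.cos T ^ p) := by
    apply intervalIntegral.integral_congr
    intro T hT
    rw [Set.uIcc_of_le (by linarith [Real.pi_pos])] at hT
    have hc : 0 ≤ Real.cos T := Real.cos_nonneg_of_mem_Icc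
      ⟨by linarith [hT.1, Real.pi_pos], hT.2⟩
    simp only [abs_of_nonneg hc, Real.cos_three_mul]
    rcases eq_or_lt_of_le hc with h | h
    · rw [← h, Real.zero_rpow hq.ne', Real.zero_rpow (by linarith : p + 2 ≠ 0),
        Real.zero_rpow (by linarith : p ≠ 0)]
      ring
    · have e1 : Real.cos T ^ (p - 2) * Real.cos T ^ (4:ℕ) = Real.cos T ^ (p + 2) := by
        rw [← Real.rpow_natCast (Real.cos T) 4, ← Real.rpow_add h]
        congr 1
        push_cast
        ring
      have e2 : Real.cos T ^ (p - 2) * Real.cos T ^ (2:ℕ) = Real.cos T ^ p := by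
        rw [← Real.rpow_natCast (Real.cos T) 2, ← Real.rpow_add h]
        congr 1
        push_cast
        ring
      have e0 : Real.cos T ^ (p - 2) * Real.cos T * (4 * Real.cos T ^ 3 - 3 * Real.cos T)
          = 4 * (Real.cos T ^ (p - 2) * Real.cos T ^ (4:ℕ))
            - 3 * (Real.cos T ^ (p - 2) * Real.cos T ^ (2:ℕ)) := by
        ring
      rw [e0, e1, e2]
  rw [hcongr]
  have hi2 : IntervalIntegrable (fun T => Real.cos T ^ (p + 2))
      MeasureTheory.volume 0 (π / 2) :=
    (cos_rpow_continuous _ (by linarith)).intervalIntegrable _ _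
  have hi0 : IntervalIntegrable (fun T => Real.cos T ^ p)
      MeasureTheory.volume 0 (π / 2) :=
    (cos_rpow_continuous _ (by linarith)).intervalIntegrable _ _
  rw [intervalIntegral.integral_sub (hi2.const_mul _) (hi0.const_mul _),
    intervalIntegral.integral_const_mul, intervalIntegral.integral_const_mul]
  have hrec := cos_rpow_recursion p (by linarith)
  have hpos := cos_rpow_integral_pos p (by linarith)
  set A := ∫ T in (0:ℝ)..(π / 2), Real.cos T ^ (p + 2) with hAdef
  set B := ∫ T in (0:ℝ)..(π / 2), Real.cos T ^ p with hBdef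
  have key2 : (p + 2) * (4 * A - 3 * B) = (p - 2) * B := by
    linear_combination 4 * hrec
  nlinarith [key2, mul_pos hq hpos, hpos]
end
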